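/- Let n > 1 and let Q be a homogeneous polynomial of degree n in n variables solving H(Q) = (-1)^{n-1}(n-1)·Q^{n-2}. Then P(x₁,…,x_{n+1}) = x_{n+1}·Q(x₁,…,xₙ) is a homogeneous polynomial of degree n+1 in n+1 variables solving H(P) = (-1)ⁿ·n·P^{n-1}. -/

import Mathlib

/-!
At a point `(x, t)` the Hessian of `P = x_{n+1} Q` is, up to reordering the variables, the bordered
matrix `[[t H, ∇Q], [∇Qᵀ, 0]]`, where `H` and `∇Q` are the Hessian and gradient of `Q` at `x`.
Euler's identity gives `H x = (n - 1) ∇Q` and `∇Q ⬝ x = n Q`, so multiplying on the right by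
`[[1, x], [0, -(n - 1) t]]` makes the matrix block triangular, whence
`-(n - 1) t det H_P = tⁿ det H · n Q`. Cancelling `t` gives the formula for `t ≠ 0`, and continuity
in `t` gives it at `t = 0`.
-/

/-- The `i`-th partial derivative of `F` at `x`. -/
noncomputable def pderivAt {n : ℕ} (F : (Fin n → ℝ) → ℝ) (i : Fin n) (x : Fin n → ℝ) : ℝ :=
  fderiv ℝ F x (Pi.single i 1)

/-- The Hessian matrix of second partial derivatives of `F` at `x`. -/
noncomputable def hessMatrix {n : ℕ} (F : (Fin n → ℝ) → ℝ) (x : Fin n → ℝ) :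
    Matrix (Fin n) (Fin n) ℝ :=
  Matrix.of fun i j => pderivAt (fun y => pderivAt F j y) i x

/-- The Hessian determinant of `F` at `x`. -/
noncomputable def hessDet {n : ℕ} (F : (Fin n → ℝ) → ℝ) (x : Fin n → ℝ) : ℝ :=
  (hessMatrix F x).det

open MvPolynomial Matrix

namespace MvPolynomial

variable {R σ : Type*}

noncomputable def gradientAt [CommSemiring R] (p : MvPolynomial σ R) (x : σ → R) : σ → R :=
  fun i => eval x (pderiv i p)

noncomputable def hessianAt [CommSemiring R] (p : MvPolynomial σ R) (x : σ → R) : Matrix σ σ R :=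
  of fun i j => eval x (pderiv i (pderiv j p))

theorem pderiv_pderiv_comm [CommRing R] (i j : σ) (p : MvPolynomial σ R) :
    pderiv i (pderiv j p) = pderiv j (pderiv i p) := by
  classical
  have h : ⁅pderiv i, pderiv j⁆ = (0 : Derivation R (MvPolynomial σ R) (MvPolynomial σ R)) :=
    derivation_ext fun k => by
      rw [Derivation.commutator_apply]
      simp [pderiv_X, Pi.single_apply, apply_ite]
  rw [← sub_eq_zero, ← Derivation.commutator_apply, h, Derivation.zero_apply]

variable [Fintype σ] {n : ℕ}

theorem IsHomogeneous.gradientAt_dotProduct [CommSemiring R] {φ : MvPolynomial σ R}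
    (h : φ.IsHomogeneous n) (x : σ → R) : φ.gradientAt x ⬝ᵥ x = n * eval x φ := by
  simpa [gradientAt, dotProduct, mul_comm] using congr(eval x $(h.sum_X_mul_pderiv))

theorem IsHomogeneous.hessianAt_mulVec [CommRing R] {φ : MvPolynomial σ R}
    (h : φ.IsHomogeneous n) (x : σ → R) :
    φ.hessianAt x *ᵥ x = ((n - 1 : ℕ) : R) • φ.gradientAt x := by
  ext i
  calc (φ.hessianAt x *ᵥ x) i = (pderiv i φ).gradientAt x ⬝ᵥ x := by
        simp only [hessianAt, gradientAt, mulVec, dotProduct, of_apply, pderiv_pderiv_comm i]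
    _ = ((n - 1 : ℕ) : R) * eval x (pderiv i φ) := h.pderiv.gradientAt_dotProduct x

theorem hasFDerivAt_eval {𝕜 : Type*} [NontriviallyNormedField 𝕜] (p : MvPolynomial σ 𝕜)
    (x : σ → 𝕜) :
    HasFDerivAt (fun y => eval y p)
      (∑ i, p.gradientAt x i • (ContinuousLinearMap.proj i : (σ → 𝕜) →L[𝕜] 𝕜)) x := by
  classical
  induction p using MvPolynomial.induction_on with
  | C a =>
    simp only [eval_C]
    refine (hasFDerivAt_const a x).congr_fderiv ?_
    ext v
    simp [gradientAt]
  | add p q hp hq =>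
    simp only [map_add]
    refine (hp.add hq).congr_fderiv ?_
    ext v
    simp [gradientAt, add_mul, Finset.sum_add_distrib]
  | mul_X p j hp =>
    simp only [map_mul, eval_X]
    refine (hp.mul (hasFDerivAt_apply j x)).congr_fderiv ?_
    ext v
    simp [gradientAt, Derivation.leibniz, pderiv_X, Pi.single_apply, apply_ite, add_mul,
      Finset.sum_add_distrib, Finset.mul_sum, mul_assoc]

end MvPolynomial

theorem pderivAt_eval {n : ℕ} (p : MvPolynomial (Fin n) ℝ) (i : Fin n) (x : Fin n → ℝ) :
    pderivAt (fun y => eval y p) i x = eval x (pderiv i p) := by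
  simp [pderivAt, (hasFDerivAt_eval p x).fderiv, gradientAt, Pi.single_apply]

theorem hessMatrix_eval {n : ℕ} (p : MvPolynomial (Fin n) ℝ) (x : Fin n → ℝ) :
    hessMatrix (fun y => eval y p) x = p.hessianAt x := by
  ext i j
  simp [hessMatrix, hessianAt, pderivAt_eval]

def borderedMatrix {m R : Type*} [Zero R] (A : Matrix m m R) (g : m → R) :
    Matrix (m ⊕ Fin 1) (m ⊕ Fin 1) R :=
  fromBlocks A (replicateCol (Fin 1) g) (replicateRow (Fin 1) g) 0

section Bordered

variable {m : Type*} [Fintype m] [DecidableEq m]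

theorem neg_mul_det_borderedMatrix {R : Type*} [CommRing R] {A : Matrix m m R} {g x : m → R} {c : R}
    (hAx : A *ᵥ x = c • g) :
    -c * (borderedMatrix A g).det = A.det * (g ⬝ᵥ x) := by
  have hprod : borderedMatrix A g * fromBlocks 1 (replicateCol (Fin 1) x) 0 (of fun _ _ => -c)
      = fromBlocks A 0 (replicateRow (Fin 1) g) (of fun _ _ => g ⬝ᵥ x) := by
    rw [borderedMatrix, fromBlocks_multiply, ← replicateCol_mulVec, hAx]
    congr 1
    · simp
    · ext i j; simp [Matrix.mul_apply, mul_comm]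
    · simp
    · ext i j; simp [dotProduct]
  have := congr(det $hprod)
  rw [det_mul, det_fromBlocks_zero₂₁, det_fromBlocks_zero₁₂, det_unique (of fun _ _ => -c),
    det_unique (of fun _ _ => g ⬝ᵥ x)] at this
  simpa [mul_comm] using this

theorem mul_det_borderedMatrix_smul {𝕜 : Type*} [NontriviallyNormedField 𝕜] [Nonempty m]
    {A : Matrix m m 𝕜} {g x : m → 𝕜} {c : 𝕜} (hAx : A *ᵥ x = c • g) (t : 𝕜) :
    c * (borderedMatrix (t • A) g).det = -(t ^ (Fintype.card m - 1) * A.det * (g ⬝ᵥ x)) := by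
  suffices (fun t : 𝕜 => c * (borderedMatrix (t • A) g).det)
      = fun t => -(t ^ (Fintype.card m - 1) * A.det * (g ⬝ᵥ x)) from congrFun this t
  refine Continuous.ext_on (dense_compl_singleton 0) ?_ (by fun_prop) fun t (ht : t ≠ 0) => ?_
  · exact continuous_const.mul <| Continuous.matrix_det <| Continuous.matrix_fromBlocks
      (continuous_id.smul continuous_const) continuous_const continuous_const continuous_const
  have h := neg_mul_det_borderedMatrix (A := t • A) (g := g) (x := x) (c := t * c)
    (by rw [smul_mulVec, hAx, smul_smul])
  rw [det_smul, ← Nat.succ_pred_eq_of_pos Fintype.card_pos, pow_succ] at h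
  apply mul_left_cancel₀ ht
  linear_combination -h

end Bordered

theorem MvPolynomial.pderiv_rename_of_notMem_range {R σ τ : Type*} [CommSemiring R] {f : σ → τ}
    {i : τ} (hi : i ∉ Set.range f) (p : MvPolynomial σ R) : pderiv i (rename f p) = 0 := by
  classical
  refine pderiv_eq_zero_of_notMem_vars fun h => hi ?_
  obtain ⟨k, -, rfl⟩ := Finset.mem_image.mp (vars_rename f p h)
  exact Set.mem_range_self k

theorem hessianAt_X_last_mul_rename {R : Type*} [CommSemiring R] {n : ℕ}
    (S : MvPolynomial (Fin n) R) (y : Fin (n + 1) → R) :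
    (X (Fin.last n) * rename Fin.castSucc S).hessianAt y
      = (borderedMatrix (y (Fin.last n) • S.hessianAt (y ∘ Fin.castSucc))
          (S.gradientAt (y ∘ Fin.castSucc))).submatrix finSumFinEquiv.symm finSumFinEquiv.symm := by
  ext i j
  cases i using Fin.lastCases <;> cases j using Fin.lastCases <;>
    simp [hessianAt, gradientAt, borderedMatrix, finSumFinEquiv_symm_apply_castSucc,
      pderiv_rename_of_notMem_range, pderiv_rename (Fin.castSucc_injective n), eval_rename,
      Pi.single_apply, (Fin.castSucc_ne_last _).symm]

theorem stmt12 (n : ℕ) (hn : 1 < n) (Q : MvPolynomial (Fin n) ℝ) (hQ : Q.IsHomogeneous n)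
    (hHQ : ∀ x : Fin n → ℝ,
      hessDet (fun y => MvPolynomial.eval y Q) x
        = (-1 : ℝ) ^ (n - 1) * ((n : ℝ) - 1) * (MvPolynomial.eval x Q) ^ (n - 2)) :
    (MvPolynomial.X (Fin.last n) * MvPolynomial.rename Fin.castSucc Q
        : MvPolynomial (Fin (n + 1)) ℝ).IsHomogeneous (n + 1)
    ∧ ∀ x : Fin (n + 1) → ℝ,
        hessDet (fun y => MvPolynomial.eval y
            (MvPolynomial.X (Fin.last n) * MvPolynomial.rename Fin.castSucc Q)) x
          = (-1 : ℝ) ^ n * (n : ℝ)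
              * (MvPolynomial.eval x
                  (MvPolynomial.X (Fin.last n) * MvPolynomial.rename Fin.castSucc Q)) ^ (n - 1) := by
  refine ⟨?_, fun y => ?_⟩
  · simpa [add_comm] using (isHomogeneous_X ℝ (Fin.last n)).mul hQ.rename_isHomogeneous
  obtain ⟨k, rfl⟩ : ∃ k, n = k + 2 := ⟨n - 2, by omega⟩
  have hdetQ := hHQ (y ∘ Fin.castSucc)
  rw [hessDet, hessMatrix_eval] at hdetQ
  have key := mul_det_borderedMatrix_smul (hQ.hessianAt_mulVec (y ∘ Fin.castSucc)) (y (Fin.last _))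
  rw [hdetQ, hQ.gradientAt_dotProduct, Fintype.card_fin] at key
  rw [hessDet, hessMatrix_eval, hessianAt_X_last_mul_rename, det_submatrix_equiv_self, map_mul,
    eval_X, eval_rename]
  apply mul_left_cancel₀ (Nat.cast_add_one_ne_zero k : (k + 1 : ℝ) ≠ 0)
  push_cast at key ⊢
  linear_combination key
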